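/- arXiv:2003.07655 — 4 statements merged into one kernel-verified Lean document; each statement's English description precedes it below -/
import Mathlib

section
/- For every n ≥ 4, the book thickness of the complete graph K_n equals ⌈n/2⌉. -/
/-!
Upper bound: place the vertices at the first `n` of `m = 2 ⌈n / 2⌉` points on a circle and put
on page `k` the chords `{a, b}` with `a + b ≡ 2k` or `2k + 1 (mod m)`; these chords are parallel,
so no two of them cross.

Lower bound: after sorting, vertex `i` sits at position `i`, and the edges that are not sides of
the polygon `0, 1, …, n - 1` are its `n (n - 3) / 2` diagonals. The diagonals on one page are
pairwise noncrossing, so there are at most `n - 3` of them, whence `p (n - 3) ≥ n (n - 3) / 2`.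
-/

open SimpleGraph

/-- A book embedding of `G` on `p` pages with respect to the linear order on the vertices
given by the injection `ord : V ↪ ℕ`: a symmetric page assignment of the edges to pages
`0, …, p-1` such that no two edges on the same page cross. -/
def IsBookEmbedding {V : Type*} (G : SimpleGraph V) (p : ℕ)
    (ord : V ↪ ℕ) (page : V → V → ℕ) : Prop :=
  (∀ a b, page a b = page b a) ∧
  (∀ a b, G.Adj a b → page a b < p) ∧
  (∀ a b c d, G.Adj a b → G.Adj c d → page a b = page c d →
    ¬ (ord a < ord c ∧ ord c < ord b ∧ ord b < ord d))

/-- The book thickness of `G`: the least number of pages over all book embeddings. -/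
noncomputable def bookThickness {V : Type*} (G : SimpleGraph V) : ℕ :=
  sInf {p | ∃ ord page, IsBookEmbedding G p ord page}

open Finset

def Noncrossing (F : Finset (ℕ × ℕ)) : Prop :=
  ∀ e ∈ F, ∀ e' ∈ F, ¬ (e.1 < e'.1 ∧ e'.1 < e.2 ∧ e.2 < e'.2)

theorem Noncrossing.mono {F F' : Finset (ℕ × ℕ)} (h : Noncrossing F) (hsub : F' ⊆ F) :
    Noncrossing F' :=
  fun e he e' he' => h e (hsub he) e' (hsub he')

/-- Split at `d`, the far end of the longest arc from `a` that stops before `b` (or `a + 1` if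
there is none): an arc starting in `(a, d)` and ending beyond `d` would cross `(a, d)`. -/
theorem Noncrossing.exists_subset_split {F : Finset (ℕ × ℕ)} {a b : ℕ} (hnc : Noncrossing F)
    (hF : ∀ e ∈ F, a ≤ e.1 ∧ e.1 + 2 ≤ e.2 ∧ e.2 ≤ b) (hab : a + 2 ≤ b) :
    ∃ d, a < d ∧ d < b ∧ F ⊆ {e ∈ F | e.2 ≤ d} ∪ {e ∈ F | d ≤ e.1} ∪ {(a, b)} := by
  obtain ⟨d, had, hdb, hd_arc, hd_max⟩ : ∃ d, a < d ∧ d < b ∧ (d = a + 1 ∨ (a, d) ∈ F) ∧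
      ∀ e ∈ F, e.1 = a → e.2 < b → e.2 ≤ d := by
    obtain ⟨d, hd_mem, hd_max⟩ := exists_max_image
      (insert (a + 1) ({e ∈ F | e.1 = a ∧ e.2 < b}.image Prod.snd)) id (insert_nonempty _ _)
    have hmax := fun e (he : e ∈ F) (he1 : e.1 = a) (he2 : e.2 < b) =>
      hd_max e.2 (mem_insert_of_mem (mem_image_of_mem _ (mem_filter.2 ⟨he, he1, he2⟩)))
    simp only [mem_insert, mem_image, mem_filter] at hd_mem
    rcases hd_mem with rfl | ⟨e, ⟨he, he1, he2⟩, rfl⟩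
    · exact ⟨_, by omega, by omega, .inl rfl, hmax⟩
    · have := hF e he
      exact ⟨_, by omega, he2, .inr (he1 ▸ he), hmax⟩
  refine ⟨d, had, hdb, fun e he => ?_⟩
  simp only [mem_union, mem_filter, mem_singleton, he, true_and]
  by_contra! h
  obtain ⟨⟨hed, hde⟩, heab⟩ := h
  have := hF e he
  by_cases he1 : e.1 = a
  · have he2 : e.2 ≠ b := fun he2 => heab (Prod.ext he1 he2)
    have := hd_max e he he1 (by omega)
    omega
  · rcases hd_arc with hd | hd
    · omega
    · exact hnc _ hd e he (by simp only; omega)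

theorem Noncrossing.card_le {F : Finset (ℕ × ℕ)} {a b : ℕ} (hnc : Noncrossing F)
    (hF : ∀ e ∈ F, a ≤ e.1 ∧ e.1 + 2 ≤ e.2 ∧ e.2 ≤ b) : #F ≤ b - a - 1 := by
  induction hk : b - a using Nat.strong_induction_on generalizing F a b with
  | _ k ih =>
  subst hk
  rcases lt_or_ge b (a + 2) with hb | hb
  · have : F = ∅ := eq_empty_of_forall_notMem fun e he => by have := hF e he; omega
    simp [this]
  obtain ⟨d, had, hdb, hsplit⟩ := hnc.exists_subset_split hF hb
  have hleft := ih (d - a) (by omega) (F := {e ∈ F | e.2 ≤ d}) (hnc.mono (filter_subset _ _))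
    (fun e he => by obtain ⟨he, hed⟩ := mem_filter.1 he; have := hF e he; omega) rfl
  have hright := ih (b - d) (by omega) (F := {e ∈ F | d ≤ e.1}) (hnc.mono (filter_subset _ _))
    (fun e he => by obtain ⟨he, hde⟩ := mem_filter.1 he; have := hF e he; omega) rfl
  calc #F ≤ #({e ∈ F | e.2 ≤ d} ∪ {e ∈ F | d ≤ e.1} ∪ {(a, b)}) := card_le_card hsplit
    _ ≤ #{e ∈ F | e.2 ≤ d} + #{e ∈ F | d ≤ e.1} + 1 :=
      (card_union_le _ _).trans (Nat.add_le_add_right (card_union_le _ _) _)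
    _ ≤ b - a - 1 := by omega

theorem Noncrossing.card_le_of_notMem {F : Finset (ℕ × ℕ)} {a b : ℕ} (hnc : Noncrossing F)
    (hF : ∀ e ∈ F, a ≤ e.1 ∧ e.1 + 2 ≤ e.2 ∧ e.2 ≤ b) (hab : a + 2 ≤ b) (hnotMem : (a, b) ∉ F) :
    #F ≤ b - a - 2 := by
  have hnc' : Noncrossing (insert (a, b) F) := by
    intro e he e' he'
    rw [mem_insert] at he he'
    rcases he with rfl | he <;> rcases he' with rfl | he'
    · omega
    · have := hF e' he'; omega
    · have := hF e he; omega
    · exact hnc e he e' he'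
  have := hnc'.card_le fun e he => by
    rcases mem_insert.1 he with rfl | he
    · exact ⟨le_rfl, hab, le_rfl⟩
    · exact hF e he
  rw [card_insert_of_notMem hnotMem] at this
  omega

def nonadjacentPairs (n : ℕ) : Finset (ℕ × ℕ) :=
  (range n).biUnion fun j => (range (j - 1)).image (·, j)

theorem mem_nonadjacentPairs {n : ℕ} {e : ℕ × ℕ} :
    e ∈ nonadjacentPairs n ↔ e.1 + 2 ≤ e.2 ∧ e.2 < n := by
  simp only [nonadjacentPairs, mem_biUnion, mem_range, mem_image]
  constructor
  · rintro ⟨j, hj, i, hi, rfl⟩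
    exact ⟨by omega, hj⟩
  · rintro ⟨h1, h2⟩
    exact ⟨e.2, h2, e.1, by omega, rfl⟩

theorem two_mul_card_nonadjacentPairs (n : ℕ) :
    2 * #(nonadjacentPairs (n + 1)) = n * (n - 1) := by
  rw [nonadjacentPairs, card_biUnion]
  · simp only [card_image_of_injective _ (fun i i' h => (Prod.mk.inj h).1), card_range]
    rw [sum_range_succ', ← sum_range_id_mul_two]
    simp [mul_comm]
  · intro j _ j' _ hjj'
    simp only [Function.onFun, Finset.disjoint_left, mem_image]
    rintro _ ⟨i, -, rfl⟩ ⟨i', -, h⟩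
    exact hjj' (Prod.mk.inj h).2.symm

/-- The diagonals of the polygon with vertices `0, 1, …, n - 1` in cyclic order. -/
def diagonals (n : ℕ) : Finset (ℕ × ℕ) :=
  (nonadjacentPairs n).erase (0, n - 1)

theorem mem_diagonals {n : ℕ} {e : ℕ × ℕ} :
    e ∈ diagonals n ↔ e ≠ (0, n - 1) ∧ e.1 + 2 ≤ e.2 ∧ e.2 < n := by
  rw [diagonals, mem_erase, mem_nonadjacentPairs]

theorem two_mul_card_diagonals (n : ℕ) : 2 * #(diagonals n) = n * (n - 3) := by
  rcases lt_or_ge n 4 with hn | hn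
  · interval_cases n <;> rfl
  obtain ⟨j, rfl⟩ : ∃ j, n = j + 4 := ⟨n - 4, by omega⟩
  have hpairs : 2 * #(nonadjacentPairs (j + 4)) = (j + 3) * (j + 2) :=
    two_mul_card_nonadjacentPairs (j + 3)
  rw [diagonals, card_erase_of_mem (mem_nonadjacentPairs.2 ⟨by omega, by omega⟩),
    show j + 4 - 3 = j + 1 by omega]
  have : (j + 3) * (j + 2) = (j + 4) * (j + 1) + 2 := by ring
  omega

theorem card_diagonals_le_of_noncrossing {n p : ℕ} (page : ℕ × ℕ → ℕ)
    (hpage : ∀ e ∈ diagonals n, page e < p)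
    (hnc : ∀ k, Noncrossing {e ∈ diagonals n | page e = k}) :
    #(diagonals n) ≤ (n - 3) * p := by
  have hmem : ∀ e ∈ diagonals n, e.1 + 2 ≤ e.2 ∧ e.2 < n := fun e he => (mem_diagonals.1 he).2
  rcases lt_or_ge n 3 with hn | hn
  · have : diagonals n = ∅ := eq_empty_of_forall_notMem fun e he => by
      have := hmem e he; omega
    simp [this]
  simpa using card_le_mul_card_image_of_maps_to (fun e he => mem_range.2 (hpage e he)) (n - 3)
    fun k _ => (Noncrossing.card_le_of_notMem (a := 0) (b := n - 1) (hnc k)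
      (fun e he => by have := hmem e (mem_filter.1 he).1; omega) (by omega)
      (fun h => (mem_diagonals.1 (mem_filter.1 h).1).1 rfl)).trans_eq (by omega)

theorem isBookEmbedding_top_fin (n : ℕ) :
    IsBookEmbedding (⊤ : SimpleGraph (Fin n)) ((n + 1) / 2) Fin.valEmbedding
      (fun a b => (a + b : ℕ) % (2 * ((n + 1) / 2)) / 2) := by
  set m := 2 * ((n + 1) / 2)
  have hmod : ∀ s < 2 * m, s % m = s ∨ s % m + m = s := by
    intro s hs
    rcases lt_or_ge s m with h | h
    · exact .inl (Nat.mod_eq_of_lt h)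
    · rw [Nat.mod_eq_sub_mod h, Nat.mod_eq_of_lt (by omega)]
      omega
  refine ⟨fun a b => by dsimp only; rw [Nat.add_comm], fun a b _ => ?_,
    fun a b c d _ _ hpage hcross => ?_⟩
  · have : (a + b : ℕ) % m < m := Nat.mod_lt _ (by have := a.isLt; omega)
    dsimp only
    omega
  · simp only [Fin.valEmbedding_apply] at hcross hpage
    have := hmod (a + b) (by omega)
    have := hmod (c + d) (by omega)
    omega

theorem IsBookEmbedding.exists_valEmbedding {n p : ℕ} {ord : Fin n ↪ ℕ}
    {page : Fin n → Fin n → ℕ} (h : IsBookEmbedding (⊤ : SimpleGraph (Fin n)) p ord page) :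
    ∃ page', IsBookEmbedding (⊤ : SimpleGraph (Fin n)) p Fin.valEmbedding page' := by
  set σ := Tuple.sort ord
  have hσ : StrictMono (ord ∘ σ) :=
    (Tuple.monotone_sort ord).strictMono_of_injective (ord.injective.comp σ.injective)
  refine ⟨fun a b => page (σ a) (σ b), fun a b => h.1 _ _, fun a b hab => h.2.1 _ _ ?_,
    fun a b c d hab hcd hpage hcross => h.2.2 _ _ _ _ ?_ ?_ hpage ?_⟩
  · simpa using hab
  · simpa using hab
  · simpa using hcd
  · simp only [Fin.valEmbedding_apply, ← Fin.lt_def] at hcross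
    exact ⟨hσ hcross.1, hσ hcross.2.1, hσ hcross.2.2⟩

theorem IsBookEmbedding.le_two_mul {n p : ℕ} (hn : 4 ≤ n) {page : Fin n → Fin n → ℕ}
    (h : IsBookEmbedding (⊤ : SimpleGraph (Fin n)) p Fin.valEmbedding page) : n ≤ 2 * p := by
  have : NeZero n := ⟨by omega⟩
  have hval : ∀ i < n, (Fin.ofNat n i : ℕ) = i := fun i hi => by
    rw [Fin.val_ofNat, Nat.mod_eq_of_lt hi]
  have hmem : ∀ e ∈ diagonals n, e.1 + 2 ≤ e.2 ∧ e.2 < n := fun e he => (mem_diagonals.1 he).2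
  have hadj : ∀ e ∈ diagonals n,
      (⊤ : SimpleGraph (Fin n)).Adj (Fin.ofNat n e.1) (Fin.ofNat n e.2) := fun e he => by
    have := hmem e he
    rw [top_adj, Ne, Fin.ext_iff, hval e.1 (by omega), hval e.2 this.2]
    omega
  have hcard := card_diagonals_le_of_noncrossing (p := p)
    (fun e => page (Fin.ofNat n e.1) (Fin.ofNat n e.2)) (fun e he => h.2.1 _ _ (hadj e he))
    fun k e he e' he' hcross => by
      obtain ⟨he, hek⟩ := mem_filter.1 he
      obtain ⟨he', he'k⟩ := mem_filter.1 he'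
      have := hmem e he
      have := hmem e' he'
      refine h.2.2 _ _ _ _ (hadj e he) (hadj e' he') (hek.trans he'k.symm) ?_
      simpa only [Fin.valEmbedding_apply, hval _ (show e.1 < n by omega),
        hval _ (show e.2 < n by omega), hval _ (show e'.1 < n by omega),
        hval _ (show e'.2 < n by omega)] using hcross
  refine Nat.le_of_mul_le_mul_right (c := n - 3) ?_ (by omega)
  calc n * (n - 3) = 2 * #(diagonals n) := (two_mul_card_diagonals n).symm
    _ ≤ 2 * p * (n - 3) := by rw [mul_assoc, mul_comm p]; omega

/-- For every `n ≥ 4`, the book thickness of the complete graph `K_n` equals `⌈n/2⌉`. -/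
theorem bookThickness_completeGraph (n : ℕ) (hn : 4 ≤ n) :
    bookThickness (⊤ : SimpleGraph (Fin n)) = (n + 1) / 2 := by
  have hupper := isBookEmbedding_top_fin n
  refine le_antisymm (Nat.sInf_le ⟨_, _, hupper⟩) (le_csInf ⟨_, _, _, hupper⟩ ?_)
  rintro p ⟨ord, page, h⟩
  obtain ⟨page', h'⟩ := h.exists_valEmbedding
  have := h'.le_two_mul hn
  omega
end

section
/- A graph has book thickness at most 1 if and only if it is outerplanar. -/
open SimpleGraph

/-- A straight-line plane drawing of a (finite simple) graph: vertices go to distinct points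
of the plane and the closed segments representing distinct edges meet only at shared
endpoints.  By Fáry's theorem, a finite simple graph is planar iff it has such a drawing. -/
def IsPlaneDrawing {V : Type*} (G : SimpleGraph V) (pos : V → ℝ × ℝ) : Prop :=
  Function.Injective pos ∧
  (∀ a b c d : V, G.Adj a b → G.Adj c d → a ≠ c → a ≠ d → b ≠ c → b ≠ d →
    segment ℝ (pos a) (pos b) ∩ segment ℝ (pos c) (pos d) = ∅) ∧
  (∀ a b c : V, G.Adj a b → G.Adj a c → b ≠ c →
    segment ℝ (pos a) (pos b) ∩ segment ℝ (pos a) (pos c) = {pos a}) ∧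
  (∀ a b v : V, G.Adj a b → v ≠ a → v ≠ b → pos v ∉ segment ℝ (pos a) (pos b))

/-- A graph is planar if it admits a plane (straight-line) drawing. -/
def IsPlanarG {V : Type*} (G : SimpleGraph V) : Prop :=
  ∃ pos : V → ℝ × ℝ, IsPlaneDrawing G pos

/-- A graph is outerplanar if it admits a plane drawing in which every vertex lies on the
outer face, i.e. every vertex point is an extreme point of the drawing (it is not in the
convex hull of the other vertex points). -/
def IsOuterplanarG {V : Type*} (G : SimpleGraph V) : Prop :=
  ∃ pos : V → ℝ × ℝ, IsPlaneDrawing G pos ∧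
    ∀ v : V, pos v ∉ convexHull ℝ (pos '' {w | w ≠ v})

/-! If no two edges interleave in a vertex order `t`, place `v` at `(t v, t v ^ 2)`: two chords of
the parabola meet only if their endpoints interleave, and every point of the parabola is extreme.
Conversely, take a straight-line drawing with all vertices in convex position and order the
vertices by direction as seen from the lexicographically smallest one. If two edges `ab`, `cd`
interleaved in this order, convex position puts `c` and `d` on opposite sides of the line `ab`,
so `cd` meets that line; convex position again forces the meeting point onto the segment `ab`,
contradicting planarity. -/

-- `t` orders the vertices along the spine of a one-page book embedding.
def IsNoncrossing {V α : Type*} [Preorder α] (G : SimpleGraph V) (t : V → α) : Prop :=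
  ∀ a b c d, G.Adj a b → G.Adj c d → ¬(t a < t c ∧ t c < t b ∧ t b < t d)

theorem IsNoncrossing.comp_strictMono {V α β : Type*} [LinearOrder α] [Preorder β]
    {G : SimpleGraph V} {t : V → α} (h : IsNoncrossing G t) {f : α → β} (hf : StrictMono f) :
    IsNoncrossing G (f ∘ t) := by
  intro a b c d hab hcd hcross
  simp only [Function.comp_apply, hf.lt_iff_lt] at hcross
  exact h a b c d hab hcd hcross

theorem exists_isBookEmbedding {V : Type*} [Finite V] (G : SimpleGraph V) :
    ∃ p ord page, IsBookEmbedding G p ord page := by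
  let e := Finite.equivFin (Sym2 V)
  refine ⟨Nat.card (Sym2 V), (Finite.equivFin V).toEmbedding.trans Fin.valEmbedding,
    fun a b => e s(a, b), fun a b => by simp only [Sym2.eq_swap], fun a b _ => (e _).isLt, ?_⟩
  intro a b c d _ _ hpage hcross
  rcases Sym2.eq_iff.1 (e.injective (Fin.ext hpage)) with ⟨rfl, rfl⟩ | ⟨rfl, rfl⟩ <;> omega

theorem bookThickness_le_one_iff_exists_isNoncrossing {V : Type*} [Finite V]
    (G : SimpleGraph V) : bookThickness G ≤ 1 ↔ ∃ ord : V ↪ ℕ, IsNoncrossing G ord := by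
  constructor
  · intro h
    obtain ⟨ord, page, -, hlt, hcross⟩ : ∃ ord page, IsBookEmbedding G (bookThickness G) ord page :=
      Nat.sInf_mem (exists_isBookEmbedding G)
    refine ⟨ord, fun a b c d hab hcd => hcross a b c d hab hcd ?_⟩
    have := hlt a b hab
    have := hlt c d hcd
    omega
  · rintro ⟨ord, h⟩
    exact Nat.sInf_le ⟨ord, fun _ _ => 0, fun _ _ => rfl, fun _ _ _ => one_pos,
      fun a b c d hab hcd _ => h a b c d hab hcd⟩

theorem exists_embedding_nat_of_isStrictTotalOrder {α : Type*} [Finite α] (r : α → α → Prop)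
    [IsStrictTotalOrder α r] : ∃ f : α ↪ ℕ, ∀ a b, f a < f b → r a b := by
  classical
  have := Fintype.ofFinite α
  let := linearOrderOfSTO r
  let e := Fintype.orderIsoFinOfCardEq α rfl
  refine ⟨e.symm.toEquiv.toEmbedding.trans Fin.valEmbedding, fun a b h => ?_⟩
  exact e.symm.lt_iff_lt.1 h

theorem mem_segment_parabola {a b : ℝ} {q : ℝ × ℝ} (hq : q ∈ segment ℝ (a, a ^ 2) (b, b ^ 2)) :
    q.1 ∈ Set.uIcc a b ∧ q.2 = q.1 ^ 2 + (q.1 - a) * (b - q.1) := by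
  refine ⟨by simpa [segment_eq_uIcc] using (Prod.segment_subset _ _ hq).1, ?_⟩
  obtain ⟨θ, -, rfl⟩ := (segment_eq_image ℝ _ _).le hq
  simp only [Prod.smul_mk, Prod.mk_add_mk, smul_eq_mul]
  ring

theorem lt_and_lt_of_chords_meet {a b c d x : ℝ} (hac : a < c) (hcb : c ≠ b) (hbd : b ≠ d)
    (hxab : x ∈ Set.Icc a b) (hxcd : x ∈ Set.Icc c d)
    (h : (x - a) * (b - x) = (x - c) * (d - x)) : c < b ∧ b < d := by
  obtain ⟨hax, hxb⟩ := hxab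
  obtain ⟨hcx, hxd⟩ := hxcd
  refine ⟨lt_of_le_of_ne (hcx.trans hxb) hcb, lt_of_le_of_ne (not_lt.1 fun hdb => ?_) hbd⟩
  nlinarith [mul_le_mul_of_nonneg_left (hxd : x ≤ d) (sub_nonneg.2 hcx)]

section Parabola

variable {V : Type*} {t : V → ℝ}

def parabolaDrawing (t : V → ℝ) (v : V) : ℝ × ℝ := (t v, t v ^ 2)

theorem parabolaDrawing_segments_disjoint {G : SimpleGraph V} (ht : Function.Injective t)
    (hG : IsNoncrossing G t) {a b c d : V} (hab : G.Adj a b) (hcd : G.Adj c d)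
    (hac : a ≠ c) (had : a ≠ d) (hbc : b ≠ c) (hbd : b ≠ d) :
    segment ℝ (parabolaDrawing t a) (parabolaDrawing t b) ∩
      segment ℝ (parabolaDrawing t c) (parabolaDrawing t d) = ∅ := by
  wlog hab' : t a < t b generalizing a b
  · rw [segment_symm]
    exact this hab.symm hbc hbd hac had <|
      (not_lt.1 hab').lt_of_ne (ht.ne hab.ne.symm)
  wlog hcd' : t c < t d generalizing c d
  · rw [segment_symm ℝ (parabolaDrawing t c)]
    exact this hcd.symm had hac hbd hbc <|
      (not_lt.1 hcd').lt_of_ne (ht.ne hcd.ne.symm)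
  wlog hac' : t a < t c generalizing a b c d
  · rw [Set.inter_comm]
    exact this hcd hcd' hab hac.symm hbc.symm had.symm hbd.symm hab' <|
      (not_lt.1 hac').lt_of_ne (ht.ne hac.symm)
  refine Set.eq_empty_of_forall_notMem fun q ⟨hq₁, hq₂⟩ => ?_
  obtain ⟨hx₁, hy₁⟩ := mem_segment_parabola hq₁
  obtain ⟨hx₂, hy₂⟩ := mem_segment_parabola hq₂
  rw [Set.uIcc_of_lt hab'] at hx₁
  rw [Set.uIcc_of_lt hcd'] at hx₂
  exact hG a b c d hab hcd ⟨hac', lt_and_lt_of_chords_meet hac' (ht.ne hbc.symm) (ht.ne hbd)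
    hx₁ hx₂ (by linarith)⟩

theorem parabolaDrawing_segments_inter_of_ne (ht : Function.Injective t) {a b c : V}
    (hbc : b ≠ c) :
    segment ℝ (parabolaDrawing t a) (parabolaDrawing t b) ∩
      segment ℝ (parabolaDrawing t a) (parabolaDrawing t c) = {parabolaDrawing t a} := by
  refine Set.eq_singleton_iff_unique_mem.2
    ⟨⟨left_mem_segment ℝ _ _, left_mem_segment ℝ _ _⟩, fun q ⟨hq₁, hq₂⟩ => ?_⟩
  obtain ⟨-, hy₁⟩ := mem_segment_parabola hq₁
  obtain ⟨-, hy₂⟩ := mem_segment_parabola hq₂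
  have : (q.1 - t a) * (t b - t c) = 0 := by linear_combination hy₂ - hy₁
  have hx : q.1 = t a := by
    simpa [sub_eq_zero, ht.ne hbc] using this
  exact Prod.ext hx (by rw [hy₁, hx]; simp [parabolaDrawing])

theorem parabolaDrawing_notMem_segment (ht : Function.Injective t) {a b v : V}
    (hva : v ≠ a) (hvb : v ≠ b) :
    parabolaDrawing t v ∉ segment ℝ (parabolaDrawing t a) (parabolaDrawing t b) := by
  intro hv
  obtain ⟨-, hy⟩ := mem_segment_parabola hv
  have : (t v - t a) * (t b - t v) = 0 := by simpa [parabolaDrawing] using hy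
  rcases mul_eq_zero.1 this with h | h
  · exact ht.ne hva (sub_eq_zero.1 h)
  · exact ht.ne hvb (sub_eq_zero.1 h).symm

theorem parabolaDrawing_notMem_convexHull (ht : Function.Injective t) (v : V) :
    parabolaDrawing t v ∉ convexHull ℝ (parabolaDrawing t '' {w | w ≠ v}) := by
  -- the tangent line at `v` separates `v` from all other points of the parabola
  let tangent : ℝ × ℝ →ₗ[ℝ] ℝ := LinearMap.snd ℝ ℝ ℝ - (2 * t v) • LinearMap.fst ℝ ℝ ℝ
  have hsub : parabolaDrawing t '' {w | w ≠ v} ⊆ {p | -t v ^ 2 < tangent p} := by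
    rintro _ ⟨w, hw, rfl⟩
    have : 0 < (t w - t v) ^ 2 := by
      have := sub_ne_zero.2 (ht.ne hw)
      positivity
    simp only [Set.mem_ofPred_eq, tangent, LinearMap.sub_apply, LinearMap.smul_apply,
      LinearMap.snd_apply, LinearMap.fst_apply, parabolaDrawing, smul_eq_mul]
    linarith
  intro hv
  have := convexHull_min hsub (convex_halfSpace_gt tangent.isLinear _) hv
  simp only [Set.mem_ofPred_eq, tangent, LinearMap.sub_apply, LinearMap.smul_apply,
    LinearMap.snd_apply, LinearMap.fst_apply, parabolaDrawing, smul_eq_mul] at this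
  linarith

theorem isOuterplanarG_of_isNoncrossing {G : SimpleGraph V} (ht : Function.Injective t)
    (hG : IsNoncrossing G t) : IsOuterplanarG G :=
  ⟨parabolaDrawing t,
    ⟨fun _ _ h => ht (congrArg Prod.fst h),
      fun _ _ _ _ hab hcd => parabolaDrawing_segments_disjoint ht hG hab hcd,
      fun _ _ _ _ _ => parabolaDrawing_segments_inter_of_ne ht,
      fun _ _ _ _ => parabolaDrawing_notMem_segment ht⟩,
    parabolaDrawing_notMem_convexHull ht⟩

end Parabola

-- Twice the signed area of the triangle `u v w`; positive iff it is counterclockwise.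
def orient (u v w : ℝ × ℝ) : ℝ := (v.1 - u.1) * (w.2 - u.2) - (v.2 - u.2) * (w.1 - u.1)

theorem orient_self_right (u v : ℝ × ℝ) : orient u v v = 0 := by
  simp only [orient]; ring

theorem orient_swap (u v w : ℝ × ℝ) : orient u w v = -orient u v w := by
  simp only [orient]; ring

theorem orient_add_orient_add_orient (u v w p : ℝ × ℝ) :
    orient p v w + orient u p w + orient u v p = orient u v w := by
  simp only [orient]; ring

theorem mem_convexHull_of_orient_nonneg {u v w p : ℝ × ℝ} (h : 0 < orient u v w)
    (hu : 0 ≤ orient p v w) (hv : 0 ≤ orient u p w) (hw : 0 ≤ orient u v p) :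
    p ∈ convexHull ℝ {u, v, w} := by
  -- barycentric coordinates are ratios of signed areas
  have key : p = ∑ i, ![orient p v w / orient u v w, orient u p w / orient u v w,
      orient u v p / orient u v w] i • ![u, v, w] i := by
    simp only [Fin.sum_univ_three, Matrix.cons_val_zero, Matrix.cons_val_one,
      Matrix.cons_val_two, Matrix.tail_cons, Matrix.head_cons]
    ext <;> simp only [Prod.fst_add, Prod.snd_add, Prod.smul_fst, Prod.smul_snd, smul_eq_mul] <;>
      field_simp <;> simp only [orient] <;> ring
  rw [key]
  refine (convex_convexHull ℝ _).sum_mem (fun i _ => ?_) ?_ (fun i _ => subset_convexHull ℝ _ ?_)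
  · fin_cases i <;> simp only [Fin.zero_eta, Fin.mk_one, Fin.reduceFinMk, Matrix.cons_val] <;>
      positivity
  · simp only [Fin.sum_univ_three, Matrix.cons_val_zero, Matrix.cons_val_one,
      Matrix.cons_val_two, Matrix.tail_cons, Matrix.head_cons]
    rw [← add_div, ← add_div, orient_add_orient_add_orient, div_self h.ne']
  · fin_cases i <;> simp

theorem collinear_of_orient_eq_zero {u v w : ℝ × ℝ} (h : orient u v w = 0) :
    Collinear ℝ {u, v, w} := by
  rcases eq_or_ne u v with rfl | huv
  · simpa using collinear_pair ℝ u w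
  have hd : (v.1 - u.1) ^ 2 + (v.2 - u.2) ^ 2 ≠ 0 := by
    intro h0
    exact huv (Prod.ext (by nlinarith) (by nlinarith))
  -- the coefficient comes from projecting `w - u` orthogonally onto `v - u`
  have hw : w = (((w.1 - u.1) * (v.1 - u.1) + (w.2 - u.2) * (v.2 - u.2)) /
      ((v.1 - u.1) ^ 2 + (v.2 - u.2) ^ 2)) • (v -ᵥ u) +ᵥ u := by
    ext <;> simp only [vsub_eq_sub, vadd_eq_add, Prod.fst_add, Prod.snd_add, Prod.smul_fst,
      Prod.smul_snd, Prod.fst_sub, Prod.snd_sub, smul_eq_mul] <;> field_simp <;>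
      simp only [orient] at h
    · linear_combination -(v.2 - u.2) * h
    · linear_combination (v.1 - u.1) * h
  have := collinear_insert_of_mem_affineSpan_pair (hw ▸ smul_vsub_vadd_mem_affineSpan_pair _ u v)
  rwa [Set.insert_comm, Set.pair_comm] at this

theorem exists_mem_segment_orient_eq_zero {a b c d : ℝ × ℝ} (hc : orient a b c < 0)
    (hd : 0 < orient a b d) : ∃ q ∈ segment ℝ c d, orient a b q = 0 := by
  have hD : 0 < orient a b d - orient a b c := by linarith
  refine ⟨(orient a b d / (orient a b d - orient a b c)) • c +
    (-orient a b c / (orient a b d - orient a b c)) • d,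
    ⟨_, _, by positivity, div_nonneg (by linarith) hD.le, by field_simp; ring, rfl⟩, ?_⟩
  simp only [orient] at hD ⊢
  simp only [Prod.fst_add, Prod.snd_add, Prod.smul_fst, Prod.smul_snd, smul_eq_mul]
  field_simp
  ring

theorem orient_pos_trans {o p q r : ℝ × ℝ} (hp : toLex o < toLex p) (hq : toLex o < toLex q)
    (hr : toLex o < toLex r) (hpq : 0 < orient o p q) (hqr : 0 < orient o q r) :
    0 < orient o p r := by
  simp only [Prod.Lex.toLex_lt_toLex] at hp hq hr
  have hr₁ : o.1 ≤ r.1 := by rcases hr with hr | ⟨hr, -⟩ <;> linarith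
  rcases hq with hq | ⟨hq, hq'⟩
  · rcases hp with hp | ⟨hp, hp'⟩
    · -- Grassmann–Plücker identity, read off in the first coordinate
      have key : (q.1 - o.1) * orient o p r =
          (r.1 - o.1) * orient o p q + (p.1 - o.1) * orient o q r := by
        simp only [orient]; ring
      have : 0 < (q.1 - o.1) * orient o p r := by
        rw [key]; nlinarith [mul_nonneg (sub_nonneg.2 hr₁) hpq.le, mul_pos (sub_pos.2 hp) hqr]
      exact pos_of_mul_pos_right this (by linarith)
    · simp only [orient, hp, sub_self, zero_mul, zero_sub] at hpq
      nlinarith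
  · simp only [orient, hq, sub_self, zero_mul, zero_sub] at hqr
    nlinarith

theorem orient_neg_of_notMem_convexHull {o a b c : ℝ × ℝ} (hc : c ∉ convexHull ℝ {o, a, b})
    (hac : 0 < orient o a c) (hcb : 0 < orient o c b) : orient a b c < 0 := by
  by_contra! h
  have hcab : orient c a b = orient a b c := by simp only [orient]; ring
  have hsum := orient_add_orient_add_orient o a b c
  exact hc (mem_convexHull_of_orient_nonneg (by linarith) (by linarith) hcb.le hac.le)

theorem mem_convexHull_of_mem_segment_of_mem_segment {x y q c d : ℝ × ℝ}
    (hq : q ∈ segment ℝ c d) (hx : x ∈ segment ℝ y q) : x ∈ convexHull ℝ {y, c, d} := by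
  refine (convex_convexHull ℝ _).segment_subset (subset_convexHull ℝ _ (by simp)) ?_ hx
  rw [← convexHull_pair] at hq
  exact convexHull_mono (Set.subset_insert _ _) hq

section AngularOrder

variable {V : Type*} {P : V → ℝ × ℝ}

theorem ConvexIndependent.notMem_segment (hP : ConvexIndependent ℝ P) {x u v : V}
    (hu : x ≠ u) (hv : x ≠ v) : P x ∉ segment ℝ (P u) (P v) := by
  rw [← convexHull_pair, ← Set.image_pair, hP.mem_convexHull_iff]
  simp [hu, hv]

theorem ConvexIndependent.notMem_convexHull_triple (hP : ConvexIndependent ℝ P) {x u v w : V}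
    (hu : x ≠ u) (hv : x ≠ v) (hw : x ≠ w) : P x ∉ convexHull ℝ {P u, P v, P w} := by
  rw [← Set.image_pair, ← Set.image_insert_eq, hP.mem_convexHull_iff]
  simp [hu, hv, hw]

theorem ConvexIndependent.orient_ne_zero (hP : ConvexIndependent ℝ P) {u v w : V}
    (huv : u ≠ v) (huw : u ≠ w) (hvw : v ≠ w) : orient (P u) (P v) (P w) ≠ 0 := fun h => by
  rcases (collinear_of_orient_eq_zero h).wbtw_or_wbtw_or_wbtw with h' | h' | h'
  · exact hP.notMem_segment huv.symm hvw h'.mem_segment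
  · exact hP.notMem_segment hvw.symm huw.symm h'.mem_segment
  · exact hP.notMem_segment huw huv h'.mem_segment

-- The order of the points by the direction in which they are seen from `P o`, with `o` first.
def AngularLT (P : V → ℝ × ℝ) (o v w : V) : Prop :=
  (v = o ∧ w ≠ o) ∨ 0 < orient (P o) (P v) (P w)

variable {o : V}

theorem AngularLT.ne_right {v w : V} (h : AngularLT P o v w) : w ≠ o := by
  rintro rfl
  rcases h with ⟨-, h⟩ | h
  · exact h rfl
  · simp [orient] at h

theorem AngularLT.ne {v w : V} (h : AngularLT P o v w) : v ≠ w := by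
  rintro rfl
  rcases h with ⟨rfl, h⟩ | h
  · exact h rfl
  · simp [orient_self_right] at h

theorem orient_pos_of_angularLT {v w : V} (h : AngularLT P o v w) (hv : v ≠ o) :
    0 < orient (P o) (P v) (P w) :=
  h.resolve_left fun h' => hv h'.1

theorem isStrictTotalOrder_angularLT (hP : ConvexIndependent ℝ P)
    (ho : ∀ v, toLex (P o) ≤ toLex (P v)) : IsStrictTotalOrder V (AngularLT P o) where
  irrefl _ h := h.ne rfl
  trans u v w huv hvw := by
    by_cases hu : u = o
    · exact Or.inl ⟨hu, hvw.ne_right⟩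
    have hv : v ≠ o := huv.ne_right
    have hlt : ∀ x, x ≠ o → toLex (P o) < toLex (P x) := fun x hx =>
      (ho x).lt_of_ne fun h => hx (hP.injective (toLex.injective h)).symm
    exact Or.inr (orient_pos_trans (hlt u hu) (hlt v hv) (hlt w hvw.ne_right)
      (orient_pos_of_angularLT huv hu) (orient_pos_of_angularLT hvw hv))
  trichotomous v w hvw hwv := by
    by_contra hne
    by_cases hv : v = o
    · exact hvw (Or.inl ⟨hv, fun hw => hne (hv.trans hw.symm)⟩)
    by_cases hw : w = o
    · exact hwv (Or.inl ⟨hw, hv⟩)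
    rcases (hP.orient_ne_zero (Ne.symm hv) (Ne.symm hw) hne).lt_or_gt with h | h
    · exact hwv (Or.inr (by rw [orient_swap]; linarith))
    · exact hvw (Or.inr h)

theorem orient_neg_of_angularLT (hP : ConvexIndependent ℝ P) {a b c : V}
    (hac : AngularLT P o a c) (hcb : AngularLT P o c b) : orient (P a) (P b) (P c) < 0 := by
  have hc : c ≠ o := hac.ne_right
  have hcb' := orient_pos_of_angularLT hcb hc
  by_cases ha : a = o
  · rw [ha, orient_swap]
    linarith
  exact orient_neg_of_notMem_convexHull (hP.notMem_convexHull_triple hc hac.ne.symm hcb.ne)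
    (orient_pos_of_angularLT hac ha) hcb'

theorem not_angularLT_interleaved (hP : ConvexIndependent ℝ P)
    (ho : ∀ v, toLex (P o) ≤ toLex (P v)) {a b c d : V}
    (hdisj : segment ℝ (P a) (P b) ∩ segment ℝ (P c) (P d) = ∅)
    (hac : AngularLT P o a c) (hcb : AngularLT P o c b) (hbd : AngularLT P o b d) : False := by
  have := isStrictTotalOrder_angularLT hP ho
  have hab : AngularLT P o a b := _root_.trans hac hcb
  have had : AngularLT P o a d := _root_.trans hab hbd
  have hc := orient_neg_of_angularLT hP hac hcb
  have hd := orient_neg_of_angularLT hP hab hbd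
  rw [orient_swap] at hd
  obtain ⟨q, hq, hq₀⟩ := exists_mem_segment_orient_eq_zero hc (neg_lt_zero.1 hd)
  rcases (collinear_of_orient_eq_zero hq₀).wbtw_or_wbtw_or_wbtw with h | h | h
  · exact hP.notMem_convexHull_triple hab.ne.symm hcb.ne.symm hbd.ne
      (mem_convexHull_of_mem_segment_of_mem_segment hq h.mem_segment)
  · exact Set.eq_empty_iff_forall_notMem.1 hdisj q
      ⟨segment_symm ℝ (P a) (P b) ▸ h.mem_segment, hq⟩
  · exact hP.notMem_convexHull_triple hab.ne hac.ne had.ne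
      (mem_convexHull_of_mem_segment_of_mem_segment hq (segment_symm ℝ q (P b) ▸ h.mem_segment))

end AngularOrder

theorem IsOuterplanarG.exists_isNoncrossing {V : Type*} [Finite V] {G : SimpleGraph V}
    (hG : IsOuterplanarG G) : ∃ ord : V ↪ ℕ, IsNoncrossing G ord := by
  obtain ⟨P, ⟨-, hdisj, -, -⟩, hext⟩ := hG
  have hP : ConvexIndependent ℝ P := convexIndependent_iff_notMem_convexHull_sdiff.2
    fun v _ hv => hext v (convexHull_mono (Set.image_mono fun _ hw => hw.2) hv)
  cases isEmpty_or_nonempty V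
  · exact ⟨Function.Embedding.ofIsEmpty, fun a => isEmptyElim a⟩
  -- seen from the lexicographically smallest point, all others lie in a half-plane bounded by a
  -- line through it
  obtain ⟨o, ho⟩ := Finite.exists_min (toLex ∘ P)
  have := isStrictTotalOrder_angularLT hP ho
  obtain ⟨ord, hord⟩ := exists_embedding_nat_of_isStrictTotalOrder (AngularLT P o)
  refine ⟨ord, fun a b c d hab hcd ⟨hac, hcb, hbd⟩ => ?_⟩
  have hne : ∀ {x y}, ord x < ord y → x ≠ y := fun h => ne_of_apply_ne ord h.ne
  have hdisj' := hdisj a b c d hab hcd (hne hac) (hne ((hac.trans hcb).trans hbd))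
    (hne hcb).symm (hne hbd)
  exact not_angularLT_interleaved hP ho hdisj' (hord _ _ hac) (hord _ _ hcb) (hord _ _ hbd)

/-- A (finite) graph has book thickness at most `1` if and only if it is outerplanar. -/
theorem bookThickness_le_one_iff_outerplanar {V : Type*} [Fintype V] (G : SimpleGraph V) :
    bookThickness G ≤ 1 ↔ IsOuterplanarG G := by
  rw [bookThickness_le_one_iff_exists_isNoncrossing]
  refine ⟨fun ⟨ord, h⟩ => ?_, IsOuterplanarG.exists_isNoncrossing⟩
  exact isOuterplanarG_of_isNoncrossing (Nat.cast_injective.comp ord.injective)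
    (h.comp_strictMono Nat.strictMono_cast)
end

section
/- Every clique on k vertices admits a book embedding on ⌈k/2⌉ pages with respect to any fixed linear ordering of its vertices; that is, for every linear order on k vertices, the edges of K_k can be partitioned into ⌈k/2⌉ pages such that no two edges in the same page cross in that order. -/
open SimpleGraph

private lemma page_key (n a b c d : ℕ) (h1 : a < c) (h2 : c < b) (h3 : b < d) (h4 : d < n) :
    ((a + b) % n) / 2 ≠ ((c + d) % n) / 2 := by
  rcases lt_or_ge (a + b) n with h1' | h1' <;> rcases lt_or_ge (c + d) n with h2' | h2'
  · rw [Nat.mod_eq_of_lt h1', Nat.mod_eq_of_lt h2']; omega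
  · rw [Nat.mod_eq_of_lt h1', Nat.mod_eq_sub_mod h2', Nat.mod_eq_of_lt (by omega)]; omega
  · rw [Nat.mod_eq_sub_mod h1', Nat.mod_eq_of_lt (by omega), Nat.mod_eq_of_lt h2']; omega
  · rw [Nat.mod_eq_sub_mod h1', Nat.mod_eq_of_lt (by omega), Nat.mod_eq_sub_mod h2',
      Nat.mod_eq_of_lt (by omega)]; omega


/-- For every linear ordering of `k` vertices, the edges of the complete graph `K_k` can be
partitioned into `⌈k/2⌉` pages so that no two edges on a common page cross. -/
theorem completeGraph_pages_any_order (k : ℕ) (V : Type*) [Fintype V]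
    (hV : Fintype.card V = k) (ord : V ↪ ℕ) :
    ∃ page : V → V → ℕ, IsBookEmbedding (⊤ : SimpleGraph V) ((k + 1) / 2) ord page := by
  classical
  set r : V → ℕ := fun v => (Finset.univ.filter (fun u => ord u < ord v)).card with hr
  have hmono : ∀ u v : V, ord u < ord v → r u < r v := by
    intro u v huv
    apply Finset.card_lt_card
    constructor
    · intro x hx
      simp only [Finset.mem_filter, Finset.mem_univ, true_and] at hx ⊢
      omega
    · intro hsub
      have := hsub (Finset.mem_filter.mpr ⟨Finset.mem_univ u, huv⟩)
      simp only [Finset.mem_filter] at this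
      omega
  have hlt : ∀ v : V, r v < k := by
    intro v
    have : (Finset.univ.filter (fun u => ord u < ord v)) ⊂ Finset.univ := by
      refine Finset.ssubset_univ_iff.mpr ?_
      intro h
      have := h ▸ Finset.mem_univ v
      simp at this
    have := Finset.card_lt_card this
    simpa [hV] using this
  refine ⟨fun a b => ((r a + r b) % k) / 2, ?_, ?_, ?_⟩
  · intro a b
    show (r a + r b) % k / 2 = (r b + r a) % k / 2
    rw [Nat.add_comm]
  · intro a b _
    show (r a + r b) % k / 2 < (k + 1) / 2
    have hk : 0 < k := lt_of_le_of_lt (Nat.zero_le _) (hlt a)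
    have := Nat.mod_lt (r a + r b) hk
    omega
  · rintro a b c d _ _ hpage ⟨h1, h2, h3⟩
    exact page_key k (r a) (r b) (r c) (r d) (hmono a c h1) (hmono c b h2)
      (hmono b d h3) (hlt d) hpage
end

section
/- Every k-framed graph is h-planar for h = ((k-2)/2)^2 (for even k ≥ 4); more precisely, in a k-framed drawing, each crossing edge lies inside a face of the planar skeleton of degree at most k and is crossed at most ⌊(k-2)/2⌋·⌈(k-2)/2⌉ ≤ ((k-2)/2)^2 times. Abstractly: in a convex drawing of the complete graph K_k (vertices on a circle, edges as straight chords), every chord is crossed by at most ⌊(k-2)/2⌋·⌈(k-2)/2⌉ other chords. -/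
open SimpleGraph

lemma amgm_nat (s t : ℕ) : s * t ≤ ((s + t) / 2) * ((s + t + 1) / 2) := by
  rcases Nat.even_or_odd (s + t) with ⟨m, hm⟩ | ⟨m, hm⟩
  · have h1 : (s + t) / 2 = m := by omega
    have h2 : (s + t + 1) / 2 = m := by omega
    rw [h1, h2]
    nlinarith [sq_nonneg (s - t : ℤ), sq_nonneg (t - s : ℤ)]
  · have h1 : (s + t) / 2 = m := by omega
    have h2 : (s + t + 1) / 2 = m + 1 := by omega
    rw [h1, h2]
    nlinarith [sq_nonneg (s - t : ℤ), sq_nonneg (t - s : ℤ)]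

/-- In a convex drawing of `K_k` (vertices `0, …, k-1` on a circle, edges as chords), every
chord is crossed by at most `⌊(k-2)/2⌋ ⋅ ⌈(k-2)/2⌉` other chords, where chords `(a,b)` and
`(c,d)` with `a < b`, `c < d` cross iff `a < c < b < d` or `c < a < d < b`. -/
theorem chord_crossings_bound (k : ℕ) (hk : 4 ≤ k) (a b : Fin k) (hab : a < b) :
    ((Finset.univ : Finset (Fin k × Fin k)).filter fun p =>
        p.1 < p.2 ∧
          ((a < p.1 ∧ p.1 < b ∧ b < p.2) ∨ (p.1 < a ∧ a < p.2 ∧ p.2 < b))).card ≤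
      ((k - 2) / 2) * ((k - 1) / 2) := by
  classical
  have hsub : ((Finset.univ : Finset (Fin k × Fin k)).filter fun p =>
        p.1 < p.2 ∧
          ((a < p.1 ∧ p.1 < b ∧ b < p.2) ∨ (p.1 < a ∧ a < p.2 ∧ p.2 < b))) ⊆
      (Finset.Ioo a b ×ˢ Finset.Ioi b) ∪ (Finset.Iio a ×ˢ Finset.Ioo a b) := by
    intro p hp
    simp only [Finset.mem_filter, Finset.mem_univ, true_and] at hp
    simp only [Finset.mem_union, Finset.mem_product, Finset.mem_Ioo, Finset.mem_Ioi,
      Finset.mem_Iio]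
    rcases hp.2 with h | h
    · exact Or.inl ⟨⟨h.1, h.2.1⟩, h.2.2⟩
    · exact Or.inr ⟨h.1, h.2.1, h.2.2⟩
  have hcard := Finset.card_le_card hsub
  have hle := le_trans hcard (Finset.card_union_le _ _)
  rw [Finset.card_product, Finset.card_product, Fin.card_Ioo, Fin.card_Ioi, Fin.card_Iio] at hle
  refine le_trans hle ?_
  have hb : (b : ℕ) < k := b.isLt
  have hab' : (a : ℕ) < (b : ℕ) := hab
  set s := (b : ℕ) - (a : ℕ) - 1 with hs
  set t := k - 1 - (b : ℕ) + (a : ℕ) with ht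
  have h1 : (↑b - ↑a - 1) * (k - 1 - ↑b) + ↑a * (↑b - ↑a - 1) = s * t := by
    rw [hs, ht, mul_comm (a : ℕ), ← Nat.mul_add]
  rw [h1]
  have h2 : s + t = k - 2 := by omega
  have h3 : s + t + 1 = k - 1 := by omega
  calc s * t ≤ ((s + t) / 2) * ((s + t + 1) / 2) := amgm_nat s t
    _ = ((k - 2) / 2) * ((k - 1) / 2) := by rw [h2, show k - 2 + 1 = k - 1 by omega]
end
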